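/- Assume that δ ≤ |V|/2. Then G admits a Defense-Optimal Nash equilibrium of AD_{α,δ}(G) if and only if G has a δ-Partitionable fractional perfect matching. -/

import Mathlib

open Finset
open scoped Classical

variable {V : Type*} [Fintype V] [DecidableEq V]

/-- The sum of `f` over the edges (elements of `Sym2 V`) containing the vertex `v`. -/
noncomputable def fracDeg (f : Sym2 V → ℝ) (v : V) : ℝ :=
  ∑ e ∈ Finset.univ.filter (fun e : Sym2 V => v ∈ e), f e

/-- A mixed profile of the game `AD_{α,δ}(G)`: each of the `α` attackers has a
probability distribution on the vertices, and each of the `δ` defenders has a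
probability distribution on the edges of `G`. -/
structure MixedProfile (G : SimpleGraph V) (α δ : ℕ) where
  atk : Fin α → V → ℝ
  dfn : Fin δ → Sym2 V → ℝ
  atk_nonneg : ∀ i v, 0 ≤ atk i v
  atk_sum : ∀ i, ∑ v : V, atk i v = 1
  dfn_nonneg : ∀ j e, 0 ≤ dfn j e
  dfn_edge : ∀ j e, e ∉ G.edgeSet → dfn j e = 0
  dfn_sum : ∀ j, ∑ e : Sym2 V, dfn j e = 1

namespace MixedProfile

variable {G : SimpleGraph V} {α δ : ℕ}

/-- A pure configuration: a vertex for each attacker, an edge for each defender. -/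
abbrev Config (V : Type*) (α δ : ℕ) := (Fin α → V) × (Fin δ → Sym2 V)

/-- The probability of a pure configuration under the (independent) mixed profile. -/
noncomputable def configProb (σ : MixedProfile G α δ) (c : Config V α δ) : ℝ :=
  (∏ i, σ.atk i (c.1 i)) * ∏ j, σ.dfn j (c.2 j)

/-- The number of attackers choosing vertex `w` in configuration `c`. -/
noncomputable def atkCount (c : Config V α δ) (w : V) : ℕ :=
  (Finset.univ.filter (fun i : Fin α => c.1 i = w)).card

/-- The number of defenders choosing an edge containing `w` in configuration `c`. -/
noncomputable def dfnCount (c : Config V α δ) (w : V) : ℕ :=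
  (Finset.univ.filter (fun j : Fin δ => w ∈ c.2 j)).card

/-- The utility of defender `d` at a pure configuration: the fair share
`|A_s(u)|/|D_s(u)| + |A_s(v)|/|D_s(v)|` for its chosen edge `(u,v)`. -/
noncomputable def defUtilPure (c : Config V α δ) (d : Fin δ) : ℝ :=
  ∑ w ∈ Finset.univ.filter (fun w : V => w ∈ c.2 d),
    (atkCount c w : ℝ) / (dfnCount c w : ℝ)

/-- The utility of attacker `a` at a pure configuration: `0` if caught, `1` otherwise. -/
noncomputable def atkUtilPure (c : Config V α δ) (a : Fin α) : ℝ :=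
  if ∃ j, c.1 a ∈ c.2 j then 0 else 1

/-- Expected utility of defender `d`. -/
noncomputable def expDefUtil (σ : MixedProfile G α δ) (d : Fin δ) : ℝ :=
  ∑ c : Config V α δ, σ.configProb c * defUtilPure c d

/-- Expected utility of attacker `a`. -/
noncomputable def expAtkUtil (σ : MixedProfile G α δ) (a : Fin α) : ℝ :=
  ∑ c : Config V α δ, σ.configProb c * atkUtilPure c a

/-- `σ` is a Nash equilibrium: no player can strictly increase her expected utility by
unilaterally changing her mixed strategy. -/
def IsNash (σ : MixedProfile G α δ) : Prop :=
  (∀ (τ : MixedProfile G α δ) (a : Fin α),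
      (∀ i, i ≠ a → τ.atk i = σ.atk i) → τ.dfn = σ.dfn →
      τ.expAtkUtil a ≤ σ.expAtkUtil a) ∧
  (∀ (τ : MixedProfile G α δ) (d : Fin δ),
      τ.atk = σ.atk → (∀ j, j ≠ d → τ.dfn j = σ.dfn j) →
      τ.expDefUtil d ≤ σ.expDefUtil d)

/-- The union of the supports of the defenders. -/
noncomputable def dfnSupports (σ : MixedProfile G α δ) : Finset (Sym2 V) :=
  Finset.univ.filter (fun e => ∃ j, 0 < σ.dfn j e)

/-- The union of the supports of the attackers. -/
noncomputable def atkSupports (σ : MixedProfile G α δ) : Finset V :=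
  Finset.univ.filter (fun v => ∃ i, 0 < σ.atk i v)

/-- The probability that some defender chooses an edge containing `v`. -/
noncomputable def hitProb (σ : MixedProfile G α δ) (v : V) : ℝ :=
  1 - ∏ j, (1 - fracDeg (σ.dfn j) v)

/-- The minimum hitting probability of the profile. -/
noncomputable def minHit [Nonempty V] (σ : MixedProfile G α δ) : ℝ :=
  Finset.univ.inf' Finset.univ_nonempty σ.hitProb

/-- The Defense-Ratio of a profile. -/
noncomputable def defenseRatio (σ : MixedProfile G α δ) : ℝ :=
  (α : ℝ) / ∑ d, σ.expDefUtil d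

end MixedProfile

/-- `F` is an edge cover of `G`. -/
def IsEdgeCover (G : SimpleGraph V) (F : Finset (Sym2 V)) : Prop :=
  (↑F ⊆ G.edgeSet) ∧ ∀ v : V, ∃ e ∈ F, v ∈ e

/-- `β'(G)`: the minimum size of an edge cover of `G`. -/
noncomputable def edgeCoverNumber (G : SimpleGraph V) : ℕ :=
  sInf {n : ℕ | ∃ F : Finset (Sym2 V), IsEdgeCover G F ∧ F.card = n}

/-- `E(f)`: the set of edges with positive weight. -/
noncomputable def fSupp (f : Sym2 V → ℝ) : Finset (Sym2 V) :=
  Finset.univ.filter (fun e => 0 < f e)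

/-- `f` is a fractional perfect matching of `G`. -/
def IsFPM (G : SimpleGraph V) (f : Sym2 V → ℝ) : Prop :=
  (∀ e, 0 ≤ f e ∧ f e ≤ 1) ∧ (∀ e, e ∉ G.edgeSet → f e = 0) ∧ ∀ v, fracDeg f v = 1

/-- Two edge sets are vertex-disjoint. -/
def VDisj (F F' : Finset (Sym2 V)) : Prop :=
  ∀ v : V, (∃ e ∈ F, v ∈ e) → ¬ ∃ e ∈ F', v ∈ e

/-- `f` is a `δ`-Partitionable fractional perfect matching: `E(f)` splits into `δ`
nonempty pairwise vertex-disjoint partites each of total weight `|V|/(2δ)`. -/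
def IsDeltaPartitionable (f : Sym2 V → ℝ) (δ : ℕ) : Prop :=
  ∃ P : Fin δ → Finset (Sym2 V),
    (∀ j, (P j).Nonempty) ∧
    (∀ j k, j ≠ k → VDisj (P j) (P k)) ∧
    (∀ j, P j ⊆ fSupp f) ∧
    (∀ e ∈ fSupp f, ∃ j, e ∈ P j) ∧
    ∀ j, ∑ e ∈ P j, f e = (Fintype.card V : ℝ) / (2 * δ)

open MixedProfile

/-! Both sides are equivalent to the existence of a profile whose defenders play on pairwise
vertex-disjoint edge sets and jointly hit every vertex with probability `2δ/|V|`.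

Given a partition `E₁, …, E_δ` of a fractional perfect matching `f`, let the attackers play
uniformly and defender `j` play `f` restricted to `E_j`, rescaled. Every vertex is then hit with
the same probability, so no attacker can improve; against uniform attackers a defender catches at
most `2α/|V|` in expectation, and disjointness lets every defender attain this bound.

Conversely, at an equilibrium each attacker can secure `1 - hitProb v` by moving to `v`, so a total
defender payoff of `2δα/|V|` forces `hitProb v ≥ 2δ/|V|` at every vertex. By the Weierstrass
product inequality `hitProb v ≤ ∑ⱼ pⱼ(v)`, where `pⱼ(v)` is the probability that defender `j`
covers `v`, and these sum to `2δ` over all vertices. So all these inequalities are equalities;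
equality in the Weierstrass inequality makes the supports vertex-disjoint, and
`|V|/(2δ) · ∑ⱼ σⱼ` is the required matching. -/

theorem Finset.eq_and_eq_of_le_of_le_of_sum_le {ι M : Type*} [AddCommMonoid M] [PartialOrder M]
    [IsOrderedCancelAddMonoid M] {s : Finset ι} {f g h : ι → M} (hfg : ∀ i ∈ s, f i ≤ g i)
    (hgh : ∀ i ∈ s, g i ≤ h i) (hsum : ∑ i ∈ s, h i ≤ ∑ i ∈ s, f i) :
    ∀ i ∈ s, f i = g i ∧ g i = h i := by
  have hfg' := sum_le_sum hfg
  have hgh' := sum_le_sum hgh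
  exact fun i hi => ⟨(sum_eq_sum_iff_of_le hfg).1 (le_antisymm hfg' (hgh'.trans hsum)) i hi,
    (sum_eq_sum_iff_of_le hgh).1 (le_antisymm hgh' (hsum.trans hfg')) i hi⟩

section ProductBounds

variable {ι R : Type*} [CommRing R] [LinearOrder R] [IsStrictOrderedRing R]
  {s : Finset ι} {p : ι → R}

theorem one_sub_sum_le_prod_one_sub (h0 : ∀ i ∈ s, 0 ≤ p i) (h1 : ∀ i ∈ s, p i ≤ 1) :
    1 - ∑ i ∈ s, p i ≤ ∏ i ∈ s, (1 - p i) := by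
  classical
  induction s using Finset.induction_on with
  | empty => simp
  | insert a s ha ih =>
    rw [sum_insert ha, prod_insert ha]
    have hs := ih (fun i hi => h0 i (mem_insert_of_mem hi)) fun i hi => h1 i (mem_insert_of_mem hi)
    have ha0 := h0 a (mem_insert_self a s)
    have hsum : 0 ≤ ∑ i ∈ s, p i := sum_nonneg fun i hi => h0 i (mem_insert_of_mem hi)
    nlinarith [mul_le_mul_of_nonneg_left hs (sub_nonneg.2 (h1 a (mem_insert_self a s)))]

theorem prod_one_sub_eq_one_sub_sum_iff (h0 : ∀ i ∈ s, 0 ≤ p i) (h1 : ∀ i ∈ s, p i ≤ 1) :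
    ∏ i ∈ s, (1 - p i) = 1 - ∑ i ∈ s, p i ↔
      (s : Set ι).Pairwise fun i j => p i = 0 ∨ p j = 0 := by
  classical
  constructor
  · intro heq i hi j hj hij
    -- the bound on `s.erase i` leaves the surplus `p i * ∑ j ∈ s.erase i, p j` in the product
    have hrest := one_sub_sum_le_prod_one_sub (s := s.erase i) (p := p)
      (fun j hj => h0 j (mem_of_mem_erase hj)) fun j hj => h1 j (mem_of_mem_erase hj)
    rw [← mul_prod_erase s _ hi, ← add_sum_erase s p hi] at heq
    have hsurplus : p i * ∑ j ∈ s.erase i, p j ≤ 0 := by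
      nlinarith [mul_le_mul_of_nonneg_left hrest (sub_nonneg.2 (h1 i hi))]
    have hj_le : p j ≤ ∑ j ∈ s.erase i, p j :=
      single_le_sum (fun j hj => h0 j (mem_of_mem_erase hj)) (mem_erase.2 ⟨hij.symm, hj⟩)
    have hij0 : p i * p j = 0 :=
      le_antisymm ((mul_le_mul_of_nonneg_left hj_le (h0 i hi)).trans hsurplus)
        (mul_nonneg (h0 i hi) (h0 j hj))
    exact mul_eq_zero.1 hij0
  · intro h
    by_cases hzero : ∀ i ∈ s, p i = 0
    · rw [prod_congr rfl fun i hi => by rw [hzero i hi, sub_zero], sum_eq_zero hzero]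
      simp
    · simp only [not_forall] at hzero
      obtain ⟨i, hi, hpi⟩ := hzero
      have hother : ∀ j ∈ s, j ≠ i → p j = 0 :=
        fun j hj hji => (h hi hj hji.symm).resolve_left hpi
      rw [prod_eq_single_of_mem i hi fun j hj hji => by rw [hother j hj hji, sub_zero],
        sum_eq_single_of_mem i hi hother]

end ProductBounds

theorem Fintype.sum_pi_prod_mul_apply {ι X R : Type*} [Fintype ι] [DecidableEq ι] [Fintype X]
    [CommSemiring R] (p : ι → X → R) (i : ι) (hp : ∀ j ≠ i, ∑ x, p j x = 1) (g : X → R) :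
    ∑ c : ι → X, (∏ j, p j (c j)) * g (c i) = ∑ x, p i x * g x := by
  have hfactor : ∀ c : ι → X,
      (∏ j, p j (c j)) * g (c i) = ∏ j, p j (c j) * if j = i then g (c j) else 1 := by
    intro c
    rw [prod_mul_distrib, Fintype.prod_ite_eq']
  rw [Fintype.sum_congr _ _ hfactor,
    ← Fintype.prod_sum fun j x => p j x * if j = i then g x else 1,
    Fintype.prod_eq_single i fun j hj => by simp [hj, hp j hj]]
  simp

section FracDeg

variable {G : SimpleGraph V} {g : Sym2 V → ℝ}

theorem fracDeg_nonneg (hg : ∀ e, 0 ≤ g e) (v : V) : 0 ≤ fracDeg g v :=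
  sum_nonneg fun e _ => hg e

theorem fracDeg_le_sum (hg : ∀ e, 0 ≤ g e) (v : V) : fracDeg g v ≤ ∑ e, g e :=
  sum_le_sum_of_subset_of_nonneg (filter_subset _ _) fun e _ _ => hg e

theorem le_fracDeg (hg : ∀ e, 0 ≤ g e) {v : V} {e : Sym2 V} (hv : v ∈ e) : g e ≤ fracDeg g v :=
  single_le_sum (fun e _ => hg e) (mem_filter.2 ⟨mem_univ e, hv⟩)

theorem fracDeg_pos_iff (hg : ∀ e, 0 ≤ g e) {v : V} :
    0 < fracDeg g v ↔ ∃ e ∈ fSupp g, v ∈ e := by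
  simp only [fracDeg, fSupp, sum_pos_iff_of_nonneg fun e _ => hg e, mem_filter, mem_univ,
    true_and]
  exact exists_congr fun e => and_comm

theorem vDisj_fSupp_iff {g' : Sym2 V → ℝ} (hg : ∀ e, 0 ≤ g e) (hg' : ∀ e, 0 ≤ g' e) :
    VDisj (fSupp g) (fSupp g') ↔ ∀ v, fracDeg g v = 0 ∨ fracDeg g' v = 0 := by
  refine forall_congr' fun v => ?_
  rw [← fracDeg_pos_iff hg, ← fracDeg_pos_iff hg', (fracDeg_nonneg hg v).lt_iff_ne',
    (fracDeg_nonneg hg' v).lt_iff_ne']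
  tauto

theorem fracDeg_eq_sum_mul_ite (g : Sym2 V → ℝ) (v : V) :
    fracDeg g v = ∑ e, g e * if v ∈ e then 1 else 0 := by
  simp only [fracDeg, sum_filter, mul_ite, mul_one, mul_zero]

theorem fracDeg_sum {ι : Type*} (s : Finset ι) (g : ι → Sym2 V → ℝ) (v : V) :
    fracDeg (fun e => ∑ j ∈ s, g j e) v = ∑ j ∈ s, fracDeg (g j) v :=
  sum_comm

theorem fracDeg_const_mul (c : ℝ) (g : Sym2 V → ℝ) (v : V) :
    fracDeg (fun e => c * g e) v = c * fracDeg g v :=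
  (mul_sum _ _ _).symm

theorem sum_fracDeg (g : Sym2 V → ℝ) : ∑ v, fracDeg g v = ∑ e, (#e.toFinset : ℝ) * g e := by
  simp only [fracDeg_eq_sum_mul_ite]
  rw [sum_comm]
  refine sum_congr rfl fun e _ => ?_
  rw [← mul_sum, sum_boole, mul_comm]
  congr 3
  ext v
  simp [Sym2.mem_toFinset]

theorem sum_fracDeg_of_edgeSet (hg : ∀ e ∉ G.edgeSet, g e = 0) :
    ∑ v, fracDeg g v = 2 * ∑ e, g e := by
  rw [sum_fracDeg, mul_sum]
  refine sum_congr rfl fun e _ => ?_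
  by_cases he : e ∈ G.edgeSet
  · rw [Sym2.card_toFinset_of_not_isDiag e (G.not_isDiag_of_mem_edgeSet he)]
    norm_num
  · simp [hg e he]

end FracDeg

namespace MixedProfile

variable {G : SimpleGraph V} {α δ : ℕ}

section PureConfigurations

variable (c : Config V α δ)

theorem sum_comp_fst_eq_sum_atkCount_mul (F : V → ℝ) :
    ∑ a, F (c.1 a) = ∑ w, (atkCount c w : ℝ) * F w := by
  rw [← sum_fiberwise' univ c.1 F]
  exact sum_congr rfl fun w _ => by rw [sum_const, nsmul_eq_mul]; rfl

theorem sum_atkCount_mem (e : Sym2 V) :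
    ∑ w ∈ univ.filter (· ∈ e), (atkCount c w : ℝ) = ∑ a, if c.1 a ∈ e then 1 else 0 := by
  rw [sum_comp_fst_eq_sum_atkCount_mul c fun w => if w ∈ e then 1 else 0, sum_filter]
  simp only [mul_ite, mul_one, mul_zero]

theorem defUtilPure_le (d : Fin δ) : defUtilPure c d ≤ ∑ a, if c.1 a ∈ c.2 d then 1 else 0 := by
  rw [← sum_atkCount_mem]
  refine sum_le_sum fun w hw => div_le_self (Nat.cast_nonneg _) ?_
  exact_mod_cast card_pos.2 ⟨d, mem_filter.2 ⟨mem_univ d, (mem_filter.1 hw).2⟩⟩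

theorem defUtilPure_eq_of_dfnCount_eq_one {d : Fin δ} (h : ∀ w ∈ c.2 d, dfnCount c w = 1) :
    defUtilPure c d = ∑ a, if c.1 a ∈ c.2 d then 1 else 0 := by
  rw [← sum_atkCount_mem]
  exact sum_congr rfl fun w hw => by rw [h w (mem_filter.1 hw).2, Nat.cast_one, div_one]

omit [Fintype V] in
theorem one_sub_atkUtilPure (a : Fin α) :
    1 - atkUtilPure c a = if dfnCount c (c.1 a) = 0 then 0 else 1 := by
  simp only [atkUtilPure, dfnCount, card_eq_zero, filter_eq_empty_iff, mem_univ,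
    ← not_exists]
  split_ifs <;> simp_all

/-- Each caught attacker is shared out in full among the defenders covering its vertex. -/
theorem sum_defUtilPure : ∑ d, defUtilPure c d = ∑ a, (1 - atkUtilPure c a) := by
  simp only [one_sub_atkUtilPure, sum_comp_fst_eq_sum_atkCount_mul (c := c)
    (fun w => if dfnCount c w = 0 then 0 else 1)]
  simp only [defUtilPure, sum_filter]
  rw [sum_comm]
  refine sum_congr rfl fun w _ => ?_
  rw [← sum_filter, sum_const, nsmul_eq_mul]
  change (dfnCount c w : ℝ) * _ = _
  split_ifs with h
  · simp [h]
  · field_simp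

end PureConfigurations

variable (σ : MixedProfile G α δ)

omit [DecidableEq V] in
theorem configProb_nonneg (c : Config V α δ) : 0 ≤ σ.configProb c :=
  mul_nonneg (prod_nonneg fun i _ => σ.atk_nonneg i _) (prod_nonneg fun j _ => σ.dfn_nonneg j _)

omit [DecidableEq V] in
theorem sum_configProb : ∑ c, σ.configProb c = 1 := by
  simp only [Fintype.sum_prod_type, configProb, ← mul_sum,
    ← Fintype.prod_sum, σ.atk_sum, σ.dfn_sum, prod_const_one, mul_one]

omit [DecidableEq V] in
theorem sum_configProb_mul_apply (i : Fin α) (d : Fin δ) (g : V → Sym2 V → ℝ) :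
    ∑ c, σ.configProb c * g (c.1 i) (c.2 d) = ∑ v, σ.atk i v * ∑ e, σ.dfn d e * g v e := by
  simp only [Fintype.sum_prod_type, configProb, mul_assoc, ← mul_sum,
    Fintype.sum_pi_prod_mul_apply σ.dfn d (fun j _ => σ.dfn_sum j)]
  exact Fintype.sum_pi_prod_mul_apply σ.atk i (fun j _ => σ.atk_sum j)
    fun v => ∑ e, σ.dfn d e * g v e

theorem sum_dfn_mul_ite_not_mem (j : Fin δ) (v : V) :
    ∑ e, σ.dfn j e * (if v ∈ e then 0 else 1) = 1 - fracDeg (σ.dfn j) v := by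
  simp only [fracDeg_eq_sum_mul_ite, ← σ.dfn_sum j, ← sum_sub_distrib, ← mul_one_sub]
  exact sum_congr rfl fun e _ => by split_ifs <;> norm_num

theorem expAtkUtil_eq (a : Fin α) : σ.expAtkUtil a = ∑ v, σ.atk a v * (1 - σ.hitProb v) := by
  have hpure : ∀ c : Config V α δ, atkUtilPure c a = ∏ j, if c.1 a ∈ c.2 j then 0 else 1 := by
    intro c
    by_cases h : ∃ j, c.1 a ∈ c.2 j
    · obtain ⟨j, hj⟩ := h
      rw [atkUtilPure, if_pos ⟨j, hj⟩]
      exact (prod_eq_zero (f := fun j => if c.1 a ∈ c.2 j then (0 : ℝ) else 1) (mem_univ j)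
        (if_pos hj)).symm
    · rw [atkUtilPure, if_neg h, prod_eq_one fun j _ => if_neg fun hj => h ⟨j, hj⟩]
  have hdfn : ∀ v : V, ∑ y : Fin δ → Sym2 V, ∏ j, σ.dfn j (y j) * (if v ∈ y j then 0 else 1) =
      1 - σ.hitProb v := by
    intro v
    rw [← Fintype.prod_sum fun j e => σ.dfn j e * if v ∈ e then 0 else 1, hitProb, sub_sub_cancel]
    exact prod_congr rfl fun j _ => σ.sum_dfn_mul_ite_not_mem j v
  simp only [expAtkUtil, hpure, Fintype.sum_prod_type, configProb, mul_assoc, ← prod_mul_distrib,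
    ← mul_sum, hdfn]
  exact Fintype.sum_pi_prod_mul_apply σ.atk a (fun j _ => σ.atk_sum j) fun v => 1 - σ.hitProb v

theorem one_sub_expAtkUtil (a : Fin α) :
    1 - σ.expAtkUtil a = ∑ v, σ.atk a v * σ.hitProb v := by
  simp only [expAtkUtil_eq, mul_one_sub, sum_sub_distrib, σ.atk_sum, sub_sub_cancel]

theorem sum_expDefUtil : ∑ d, σ.expDefUtil d = ∑ a, (1 - σ.expAtkUtil a) := by
  simp only [expDefUtil, expAtkUtil]
  rw [sum_comm]
  simp_rw [← mul_sum, sum_defUtilPure, mul_sum]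
  rw [sum_comm]
  refine sum_congr rfl fun a _ => ?_
  rw [sum_congr rfl fun c _ => mul_one_sub _ _, sum_sub_distrib, σ.sum_configProb]

theorem sum_configProb_mul_catches (d : Fin δ) :
    ∑ c, σ.configProb c * (∑ a, if c.1 a ∈ c.2 d then 1 else 0) =
      ∑ a, ∑ v, σ.atk a v * fracDeg (σ.dfn d) v := by
  simp only [mul_sum]
  rw [sum_comm]
  refine sum_congr rfl fun a _ => ?_
  rw [σ.sum_configProb_mul_apply a d fun v e => if v ∈ e then 1 else 0]
  simp only [fracDeg_eq_sum_mul_ite]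

theorem expDefUtil_le (d : Fin δ) :
    σ.expDefUtil d ≤ ∑ a, ∑ v, σ.atk a v * fracDeg (σ.dfn d) v := by
  rw [← sum_configProb_mul_catches]
  exact sum_le_sum fun c _ => mul_le_mul_of_nonneg_left (defUtilPure_le c d) (σ.configProb_nonneg c)

theorem fracDeg_dfn_le_one (j : Fin δ) (v : V) : fracDeg (σ.dfn j) v ≤ 1 :=
  (fracDeg_le_sum (σ.dfn_nonneg j) v).trans_eq (σ.dfn_sum j)

theorem sum_fracDeg_dfn (j : Fin δ) : ∑ v, fracDeg (σ.dfn j) v = 2 := by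
  rw [sum_fracDeg_of_edgeSet (σ.dfn_edge j), σ.dfn_sum, mul_one]

theorem hitProb_le_sum_fracDeg (v : V) : σ.hitProb v ≤ ∑ j, fracDeg (σ.dfn j) v := by
  have := one_sub_sum_le_prod_one_sub (s := univ) (p := fun j => fracDeg (σ.dfn j) v)
    (fun j _ => fracDeg_nonneg (σ.dfn_nonneg j) v) fun j _ => σ.fracDeg_dfn_le_one j v
  rw [hitProb]
  linarith

def DefendersDisjoint : Prop :=
  Pairwise fun j j' => VDisj (fSupp (σ.dfn j)) (fSupp (σ.dfn j'))

theorem hitProb_eq_sum_fracDeg_iff :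
    (∀ v, σ.hitProb v = ∑ j, fracDeg (σ.dfn j) v) ↔ σ.DefendersDisjoint := by
  have hprod : ∀ v, σ.hitProb v = ∑ j, fracDeg (σ.dfn j) v ↔
      ∏ j, (1 - fracDeg (σ.dfn j) v) = 1 - ∑ j, fracDeg (σ.dfn j) v := fun v => by
    rw [hitProb]
    constructor <;> intro h <;> linarith
  simp only [hprod, prod_one_sub_eq_one_sub_sum_iff (fun j _ => fracDeg_nonneg (σ.dfn_nonneg j) _)
    (fun j _ => σ.fracDeg_dfn_le_one j _), coe_univ, Set.pairwise_univ, DefendersDisjoint,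
    vDisj_fSupp_iff (σ.dfn_nonneg _) (σ.dfn_nonneg _)]
  exact ⟨fun h j j' hjj' v => h v hjj', fun h v j j' hjj' => h hjj' v⟩

omit [DecidableEq V] in
theorem mem_fSupp_of_configProb_ne_zero {c : Config V α δ} (hc : σ.configProb c ≠ 0) (j : Fin δ) :
    c.2 j ∈ fSupp (σ.dfn j) := by
  have hdfn := prod_ne_zero_iff.1 (right_ne_zero_of_mul hc) j (mem_univ j)
  exact mem_filter.2 ⟨mem_univ _, (σ.dfn_nonneg j _).lt_of_ne' hdfn⟩

variable {σ}

theorem DefendersDisjoint.expDefUtil_eq (h : σ.DefendersDisjoint) (d : Fin δ) :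
    σ.expDefUtil d = ∑ a, ∑ v, σ.atk a v * fracDeg (σ.dfn d) v := by
  rw [expDefUtil, ← sum_configProb_mul_catches]
  refine sum_congr rfl fun c _ => ?_
  by_cases hc : σ.configProb c = 0
  · simp [hc]
  refine congrArg _ (defUtilPure_eq_of_dfnCount_eq_one c fun w hw => card_eq_one.2 ⟨d, ?_⟩)
  ext j
  simp only [mem_filter, mem_univ, true_and, mem_singleton]
  refine ⟨fun hj => ?_, fun hj => hj ▸ hw⟩
  by_contra hjd
  exact h hjd w ⟨_, σ.mem_fSupp_of_configProb_ne_zero hc j, hj⟩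
    ⟨_, σ.mem_fSupp_of_configProb_ne_zero hc d, hw⟩

omit [DecidableEq V] in
theorem DefendersDisjoint.dfn_eq_zero (h : σ.DefendersDisjoint) {j j' : Fin δ} {e : Sym2 V}
    (hj : 0 < σ.dfn j e) (hj' : j' ≠ j) : σ.dfn j' e = 0 := by
  by_contra hne
  refine h hj' e.out.1 ⟨e, mem_filter.2 ⟨mem_univ e, (σ.dfn_nonneg j' e).lt_of_ne' hne⟩,
    Sym2.out_fst_mem e⟩ ⟨e, mem_filter.2 ⟨mem_univ e, hj⟩, Sym2.out_fst_mem e⟩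

variable (σ)

theorem sum_atk_mul_fracDeg_of_uniform (hunif : ∀ a v, σ.atk a v = 1 / Fintype.card V)
    (d : Fin δ) : ∑ a, ∑ v, σ.atk a v * fracDeg (σ.dfn d) v = 2 * α / Fintype.card V := by
  simp only [hunif, ← mul_sum, sum_fracDeg_dfn, sum_const, card_univ, Fintype.card_fin,
    nsmul_eq_mul]
  ring

def attackAt (a : Fin α) (v : V) : MixedProfile G α δ where
  atk := Function.update σ.atk a (Pi.single v 1)
  dfn := σ.dfn
  atk_nonneg i w := by
    rcases eq_or_ne i a with rfl | hi
    · rw [Function.update_self, Pi.single_apply]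
      split_ifs <;> norm_num
    · rw [Function.update_of_ne hi]
      exact σ.atk_nonneg i w
  atk_sum i := by
    rcases eq_or_ne i a with rfl | hi
    · simp
    · rw [Function.update_of_ne hi]
      exact σ.atk_sum i
  dfn_nonneg := σ.dfn_nonneg
  dfn_edge := σ.dfn_edge
  dfn_sum := σ.dfn_sum

theorem expAtkUtil_attackAt (a : Fin α) (v : V) :
    (σ.attackAt a v).expAtkUtil a = 1 - σ.hitProb v := by
  rw [expAtkUtil_eq]
  simp [attackAt, hitProb, Pi.single_apply, ite_mul]

variable {σ}

theorem IsNash.sum_atk_mul_hitProb_le (hσ : σ.IsNash) (a : Fin α) (v : V) :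
    ∑ w, σ.atk a w * σ.hitProb w ≤ σ.hitProb v := by
  have := hσ.1 (σ.attackAt a v) a (fun i hi => Function.update_of_ne hi _ _) rfl
  rw [expAtkUtil_attackAt] at this
  linarith [σ.one_sub_expAtkUtil a]

theorem IsNash.sum_expDefUtil_le (hσ : σ.IsNash) (v : V) :
    ∑ d, σ.expDefUtil d ≤ α * σ.hitProb v := by
  simp only [sum_expDefUtil, one_sub_expAtkUtil]
  calc _ ≤ ∑ _a : Fin α, σ.hitProb v := sum_le_sum fun a _ => hσ.sum_atk_mul_hitProb_le a v
    _ = _ := by simp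

theorem IsNash.defendersDisjoint_of_defenseRatio [Nonempty V] (hσ : σ.IsNash) (hα : 0 < α)
    (hδ : 0 < δ) (hDR : σ.defenseRatio = Fintype.card V / (2 * δ)) :
    σ.DefendersDisjoint ∧ ∀ v, ∑ j, fracDeg (σ.dfn j) v = 2 * δ / Fintype.card V := by
  have hk : (0 : ℝ) < Fintype.card V := by exact_mod_cast Fintype.card_pos
  have hα' : (0 : ℝ) < α := by exact_mod_cast hα
  have hδ' : (0 : ℝ) < δ := by exact_mod_cast hδ
  have htotal : ∑ d, σ.expDefUtil d = α * (2 * δ / Fintype.card V) := by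
    have hne : ∑ d, σ.expDefUtil d ≠ 0 := fun h0 => by
      rw [defenseRatio, h0, div_zero] at hDR
      exact (div_pos hk (by positivity)).ne hDR
    rw [defenseRatio, div_eq_div_iff hne (by positivity)] at hDR
    field_simp
    linarith
  have hlow : ∀ v, 2 * δ / Fintype.card V ≤ σ.hitProb v := fun v =>
    le_of_mul_le_mul_left (htotal ▸ hσ.sum_expDefUtil_le v) hα'
  have hcoverage : ∑ v, ∑ j, fracDeg (σ.dfn j) v ≤ ∑ _v : V, 2 * δ / (Fintype.card V : ℝ) := by
    rw [sum_comm]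
    simp only [sum_fracDeg_dfn, sum_const, card_univ, Fintype.card_fin, nsmul_eq_mul]
    rw [mul_div_cancel₀ _ hk.ne', mul_comm]
  have hsq := eq_and_eq_of_le_of_le_of_sum_le (fun v _ => hlow v)
    (fun v _ => σ.hitProb_le_sum_fracDeg v) hcoverage
  refine ⟨σ.hitProb_eq_sum_fracDeg_iff.1 fun v => (hsq v (mem_univ v)).2, fun v => ?_⟩
  obtain ⟨h1, h2⟩ := hsq v (mem_univ v)
  exact (h1.trans h2).symm

variable (σ)

noncomputable def defenseMatching (e : Sym2 V) : ℝ :=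
  Fintype.card V / (2 * δ) * ∑ j, σ.dfn j e

theorem isFPM_defenseMatching (hδ : 0 < δ)
    (hcov : ∀ v, ∑ j, fracDeg (σ.dfn j) v = 2 * δ / Fintype.card V) :
    IsFPM G σ.defenseMatching := by
  have hnonneg : ∀ e, 0 ≤ σ.defenseMatching e := fun e =>
    mul_nonneg (by positivity) (sum_nonneg fun j _ => σ.dfn_nonneg j e)
  have hdeg : ∀ v, fracDeg σ.defenseMatching v = 1 := fun v => by
    have hk : (0 : ℝ) < Fintype.card V := by exact_mod_cast Fintype.card_pos_iff.2 ⟨v⟩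
    have hδ' : (0 : ℝ) < δ := by exact_mod_cast hδ
    unfold defenseMatching
    rw [fracDeg_const_mul, fracDeg_sum, hcov]
    field_simp
  refine ⟨fun e => ⟨hnonneg e, (le_fracDeg hnonneg (Sym2.out_fst_mem e)).trans_eq (hdeg _)⟩,
    fun e he => ?_, hdeg⟩
  simp [defenseMatching, σ.dfn_edge _ e he]

variable {σ}

omit [DecidableEq V] in
theorem DefendersDisjoint.isDeltaPartitionable_defenseMatching (h : σ.DefendersDisjoint) :
    IsDeltaPartitionable σ.defenseMatching δ := by
  refine ⟨fun j => fSupp (σ.dfn j), fun j => ?_, fun j j' hjj' => h hjj', fun j e he => ?_,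
    fun e he => ?_, fun j => ?_⟩
  · obtain ⟨e, -, he⟩ := exists_ne_zero_of_sum_ne_zero ((σ.dfn_sum j).trans_ne one_ne_zero)
    exact ⟨e, mem_filter.2 ⟨mem_univ e, (σ.dfn_nonneg j e).lt_of_ne' he⟩⟩
  · have hk : (0 : ℝ) < Fintype.card V := by exact_mod_cast Fintype.card_pos_iff.2 ⟨e.out.1⟩
    have hδ : (0 : ℝ) < δ := by exact_mod_cast j.pos
    exact mem_filter.2 ⟨mem_univ e, mul_pos (by positivity)
      (sum_pos' (fun j _ => σ.dfn_nonneg j e) ⟨j, mem_univ j, (mem_filter.1 he).2⟩)⟩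
  · obtain ⟨j, -, hj⟩ :=
      exists_ne_zero_of_sum_ne_zero (right_ne_zero_of_mul (mem_filter.1 he).2.ne')
    exact ⟨j, mem_filter.2 ⟨mem_univ e, (σ.dfn_nonneg j e).lt_of_ne' hj⟩⟩
  · dsimp only
    rw [sum_congr rfl fun e he => by
        rw [defenseMatching, sum_eq_single j (fun j' _ hj' => h.dfn_eq_zero (mem_filter.1 he).2 hj')
          (by simp)],
      ← mul_sum, fSupp, sum_filter_of_ne fun e _ he => (σ.dfn_nonneg j e).lt_of_ne' he,
      σ.dfn_sum, mul_one]

theorem DefendersDisjoint.isNash (h : σ.DefendersDisjoint)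
    (hunif : ∀ a v, σ.atk a v = 1 / Fintype.card V)
    (hcov : ∀ v, ∑ j, fracDeg (σ.dfn j) v = 2 * δ / Fintype.card V) :
    σ.IsNash := by
  have hatk : ∀ τ : MixedProfile G α δ, τ.dfn = σ.dfn →
      ∀ a, τ.expAtkUtil a = 1 - 2 * δ / Fintype.card V := by
    intro τ hτ a
    have hhit : ∀ v, τ.hitProb v = 2 * δ / Fintype.card V := fun v => by
      rw [← hcov v, ← σ.hitProb_eq_sum_fracDeg_iff.2 h v, hitProb, hitProb, hτ]
    simp only [expAtkUtil_eq, hhit, ← sum_mul, τ.atk_sum, one_mul]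
  refine ⟨fun τ a _ hτ => (hatk τ hτ a).trans_le (hatk σ rfl a).ge, fun τ d hτ _ => ?_⟩
  calc τ.expDefUtil d ≤ ∑ a, ∑ v, τ.atk a v * fracDeg (τ.dfn d) v := τ.expDefUtil_le d
    _ = 2 * α / Fintype.card V := τ.sum_atk_mul_fracDeg_of_uniform (hτ ▸ hunif) d
    _ = σ.expDefUtil d := by rw [h.expDefUtil_eq, σ.sum_atk_mul_fracDeg_of_uniform hunif]

theorem DefendersDisjoint.defenseRatio_eq [Nonempty V] (h : σ.DefendersDisjoint) (hα : 0 < α)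
    (hδ : 0 < δ) (hunif : ∀ a v, σ.atk a v = 1 / Fintype.card V) :
    σ.defenseRatio = Fintype.card V / (2 * δ) := by
  have hk : (0 : ℝ) < Fintype.card V := by exact_mod_cast Fintype.card_pos
  have hα' : (0 : ℝ) < α := by exact_mod_cast hα
  have hδ' : (0 : ℝ) < δ := by exact_mod_cast hδ
  simp only [defenseRatio, h.expDefUtil_eq, σ.sum_atk_mul_fracDeg_of_uniform hunif, sum_const,
    card_univ, Fintype.card_fin, nsmul_eq_mul]
  field_simp

end MixedProfile

theorem sum_ite_mem_of_vDisj_of_cover {ι : Type*} [Fintype ι] {f : Sym2 V → ℝ}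
    {P : ι → Finset (Sym2 V)} (hf : ∀ e, 0 ≤ f e) (hdisj : ∀ j k, j ≠ k → VDisj (P j) (P k))
    (hcover : ∀ e ∈ fSupp f, ∃ j, e ∈ P j) (e : Sym2 V) :
    ∑ j, (if e ∈ P j then f e else 0) = f e := by
  rcases (hf e).eq_or_lt with hfe | hfe
  · simp [← hfe]
  obtain ⟨j, hj⟩ := hcover e (mem_filter.2 ⟨mem_univ e, hfe⟩)
  rw [sum_eq_single j (fun j' _ hj' => if_neg fun hj'e => hdisj j' j hj' e.out.1
    ⟨e, hj'e, Sym2.out_fst_mem e⟩ ⟨e, hj, Sym2.out_fst_mem e⟩) (by simp), if_pos hj]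

theorem IsDeltaPartitionable.exists_defendersDisjoint [Nonempty V] {G : SimpleGraph V}
    {f : Sym2 V → ℝ} {δ : ℕ} (hf : IsFPM G f) (hp : IsDeltaPartitionable f δ) (α : ℕ) :
    ∃ σ : MixedProfile G α δ, (∀ a v, σ.atk a v = 1 / Fintype.card V) ∧ σ.DefendersDisjoint ∧
      ∀ v, ∑ j, fracDeg (σ.dfn j) v = 2 * δ / Fintype.card V := by
  obtain ⟨P, -, hdisj, hsub, hcover, hsum⟩ := hp
  have hk : (0 : ℝ) < Fintype.card V := by exact_mod_cast Fintype.card_pos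
  have hpos : ∀ j, ∀ e ∈ P j, 0 < f e := fun j e he => (mem_filter.1 (hsub j he)).2
  let σ : MixedProfile G α δ :=
    { atk := fun _ _ => 1 / Fintype.card V
      dfn := fun j e => if e ∈ P j then 2 * δ / Fintype.card V * f e else 0
      atk_nonneg := fun _ _ => by positivity
      atk_sum := fun _ => by simp
      dfn_nonneg := fun j e => by
        split_ifs
        exacts [mul_nonneg (by positivity) (hf.1 e).1, le_rfl]
      dfn_edge := fun j e he => if_neg fun hmem => (hpos j e hmem).ne' (hf.2.1 e he)
      dfn_sum := fun j => by
        have hδ : (0 : ℝ) < δ := by exact_mod_cast j.pos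
        rw [sum_ite_mem, univ_inter, ← mul_sum, hsum j]
        field_simp }
  have hsupp : ∀ j, fSupp (σ.dfn j) = P j := fun j => by
    have hδ : (0 : ℝ) < δ := by exact_mod_cast j.pos
    ext e
    simp only [fSupp, mem_filter, mem_univ, true_and, σ]
    split_ifs with he
    · exact iff_of_true (mul_pos (by positivity) (hpos j e he)) he
    · exact iff_of_false (lt_irrefl 0) he
  refine ⟨σ, fun _ _ => rfl, fun j j' hjj' => ?_, fun v => ?_⟩
  · change VDisj (fSupp (σ.dfn j)) (fSupp (σ.dfn j'))
    rw [hsupp, hsupp]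
    exact hdisj j j' hjj'
  · have htotal : (fun e => ∑ j, σ.dfn j e) = fun e => 2 * δ / Fintype.card V * f e := funext
      fun e => by
        rw [← sum_ite_mem_of_vDisj_of_cover (fun e => (hf.1 e).1) hdisj hcover e, mul_sum]
        exact sum_congr rfl fun j _ => by simp only [σ, mul_ite, mul_zero]
    rw [← fracDeg_sum, htotal, fracDeg_const_mul, hf.2.2 v, mul_one]

theorem defense_optimal_iff_delta_partitionable_general (G : SimpleGraph V) [Nonempty V]
    (α δ : ℕ) (hα : 1 ≤ α) (hδ : 1 ≤ δ)
    (hle : (δ : ℝ) ≤ (Fintype.card V : ℝ) / 2) :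
    (∃ σ : MixedProfile G α δ, σ.IsNash ∧
        σ.defenseRatio = max 1 ((Fintype.card V : ℝ) / (2 * δ))) ↔
    ∃ f : Sym2 V → ℝ, IsFPM G f ∧ IsDeltaPartitionable f δ := by
  have hmax : max 1 ((Fintype.card V : ℝ) / (2 * δ)) = Fintype.card V / (2 * δ) :=
    max_eq_right ((one_le_div (by positivity)).2 (by linarith))
  rw [hmax]
  constructor
  · rintro ⟨σ, hσ, hDR⟩
    obtain ⟨hdisj, hcov⟩ := hσ.defendersDisjoint_of_defenseRatio hα hδ hDR
    exact ⟨_, σ.isFPM_defenseMatching hδ hcov, hdisj.isDeltaPartitionable_defenseMatching⟩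
  · rintro ⟨f, hf, hp⟩
    obtain ⟨σ, hunif, hdisj, hcov⟩ := hp.exists_defendersDisjoint hf α
    exact ⟨σ, hdisj.isNash hunif hcov, hdisj.defenseRatio_eq hα hδ hunif⟩

/-- assume `δ ≤ |V|/2`. Then `AD_{α,δ}(G)` admits a Defense-Optimal Nash
equilibrium (one with `DR_σ = max {1, |V|/(2δ)}`) iff `G` has a `δ`-Partitionable
fractional perfect matching. -/
theorem defense_optimal_iff_delta_partitionable (G : SimpleGraph V) [Nonempty V]
    (hG : ∀ v : V, ∃ u, G.Adj u v) (α δ : ℕ) (hα : 1 ≤ α) (hδ : 1 ≤ δ)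
    (hle : (δ : ℝ) ≤ (Fintype.card V : ℝ) / 2) :
    (∃ σ : MixedProfile G α δ, σ.IsNash ∧
        σ.defenseRatio = max 1 ((Fintype.card V : ℝ) / (2 * δ))) ↔
    ∃ f : Sym2 V → ℝ, IsFPM G f ∧ IsDeltaPartitionable f δ :=
  defense_optimal_iff_delta_partitionable_general G α δ hα hδ hle
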